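/- arXiv:1412.6507 — 3 statements merged into one kernel-verified Lean document; each statement's English description precedes it below -/
import Mathlib

section
/- Let T ≥ 1 and let v = (v_0, ..., v_T) and w = (w_0, ..., w_T) be random sequences on a finite state space, each satisfying the Markov property (for each i, v_i is conditionally independent of v_0,...,v_{i-2} given v_{i-1}, and similarly for w). Then the total variation distance between the joint distributions satisfies d_TV(v, w) ≤ 2 · Σ_{i=1}^{T} d_TV((v_{i-1}, v_i), (w_{i-1}, w_i)). -/
/-- Total variation distance between two functions on a finite type. -/
noncomputable def tvDist {X : Type*} [Fintype X] (p q : X → ℝ) : ℝ :=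
  (∑ x, |p x - q x|) / 2

/-- The joint distribution of the pair `(v_{i-1}, v_i)` under a distribution
`μ` on length-`(T+1)` sequences. -/
noncomputable def pairMarginal {S : Type*} [Fintype S] [DecidableEq S] {T : ℕ}
    (μ : (Fin (T + 1) → S) → ℝ) (i : Fin T) : S × S → ℝ :=
  fun ab => ∑ f : Fin (T + 1) → S,
    if f i.castSucc = ab.1 ∧ f i.succ = ab.2 then μ f else 0

section AuxMarkov

set_option linter.unusedSectionVars false

variable {S : Type*} [Fintype S] [DecidableEq S]

/-- Marginal distribution at time `j` of a Markov chain with initial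
distribution `p` and kernels `K`. -/
noncomputable def margAux (p : S → ℝ) (K : ℕ → S → S → ℝ) : ℕ → S → ℝ
  | 0 => p
  | j+1 => fun a => ∑ b, margAux p K j b * K j b a

@[simp] lemma margAux_zero (p : S → ℝ) (K : ℕ → S → S → ℝ) : margAux p K 0 = p := rfl

lemma margAux_succ (p : S → ℝ) (K : ℕ → S → S → ℝ) (j : ℕ) (a : S) :
    margAux p K (j+1) a = ∑ b, margAux p K j b * K j b a := rfl

lemma margAux_congr (p : S → ℝ) {K K' : ℕ → S → S → ℝ} {j : ℕ}
    (h : ∀ i, i < j → K i = K' i) : margAux p K j = margAux p K' j := by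
  induction j with
  | zero => rfl
  | succ j ih =>
    funext a
    rw [margAux_succ, margAux_succ, ih (fun i hi => h i (Nat.lt_succ_of_lt hi)),
      h j (Nat.lt_succ_self j)]

lemma margAux_shift (p : S → ℝ) (K : ℕ → S → S → ℝ) (j : ℕ) :
    margAux (margAux p K 1) (fun n => K (n+1)) j = margAux p K (j+1) := by
  induction j with
  | zero => rfl
  | succ j ih =>
    funext a
    rw [margAux_succ, margAux_succ, ih]

/-- The path weight of a Markov chain. -/
noncomputable def pathW {T : ℕ} (p : S → ℝ) (K : ℕ → S → S → ℝ) : (Fin (T+1) → S) → ℝ :=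
  fun f => p (f 0) * ∏ i : Fin T, K i.val (f i.castSucc) (f i.succ)

lemma pathW_cons {T : ℕ} (p : S → ℝ) (K : ℕ → S → S → ℝ) (a : S) (g : Fin (T+1) → S) :
    pathW (T := T+1) p K (Fin.cons a g) = p a * pathW (T := T) (K 0 a) (fun n => K (n+1)) g := by
  unfold pathW
  rw [Fin.prod_univ_succ, ← mul_assoc, ← mul_assoc]
  congr 1

lemma pathW_mix {T : ℕ} (p : S → ℝ) (K : ℕ → S → S → ℝ) (g : Fin (T+1) → S) :
    ∑ a, p a * pathW (T := T) (K 0 a) (fun n => K (n+1)) g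
      = pathW (T := T) (margAux p K 1) (fun n => K (n+1)) g := by
  unfold pathW
  rw [margAux_succ, Finset.sum_mul]
  exact Finset.sum_congr rfl fun a _ => by simp only [margAux_zero]; ring

lemma main_sum : ∀ (T : ℕ) (p : S → ℝ) (K : ℕ → S → S → ℝ),
    (∀ i a, ∑ b, K i a b = 1) → ∀ (j : ℕ) (hj : j < T + 1) (h : S → ℝ),
    (∑ f : Fin (T+1) → S, pathW p K f * h (f ⟨j, hj⟩)) = ∑ a, margAux p K j a * h a := by
  intro T
  induction T with
  | zero =>
    intro p K hK j hj h
    obtain rfl : j = 0 := by omega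
    rw [← (Equiv.funUnique (Fin 1) S).symm.sum_comp]
    simp [pathW, margAux]
  | succ T ih =>
    intro p K hK j hj h
    rw [← (Fin.consEquiv (fun _ : Fin (T+2) => S)).sum_comp, Fintype.sum_prod_type]
    have hce : ∀ (a : S) (g : Fin (T+1) → S),
        (Fin.consEquiv fun _ : Fin (T+2) => S) (a, g) = Fin.cons a g := fun _ _ => rfl
    simp only [hce]
    rcases j with _ | j'
    · have inner : ∀ a : S,
          (∑ g : Fin (T+1) → S, pathW (T := T) (K 0 a) (fun n => K (n+1)) g) = 1 := by
        intro a
        have h2 := ih (K 0 a) (fun n => K (n+1)) (fun i b => hK (i+1) b) 0 (Nat.succ_pos T)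
            (fun _ => 1)
        simpa [hK 0 a] using h2
      simp only [margAux_zero]
      trans (∑ a, (p a * h a) * ∑ g : Fin (T+1) → S, pathW (T := T) (K 0 a) (fun n => K (n+1)) g)
      · apply Finset.sum_congr rfl
        intro a _
        rw [Finset.mul_sum]
        apply Finset.sum_congr rfl
        intro g _
        rw [pathW_cons]
        have : (Fin.cons a g : Fin (T+2) → S) ⟨0, hj⟩ = a := rfl
        rw [this]
        ring
      · apply Finset.sum_congr rfl
        intro a _
        rw [inner a, mul_one]
    · have hj' : j' < T + 1 := by omega
      rw [Finset.sum_comm]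
      have hcons : ∀ (a : S) (g : Fin (T+1) → S),
          (Fin.cons a g : Fin (T+2) → S) ⟨j'+1, hj⟩ = g ⟨j', hj'⟩ := fun a g => rfl
      trans (∑ g : Fin (T+1) → S,
          pathW (T := T) (margAux p K 1) (fun n => K (n+1)) g * h (g ⟨j', hj'⟩))
      · apply Finset.sum_congr rfl
        intro g _
        rw [← pathW_mix, Finset.sum_mul]
        apply Finset.sum_congr rfl
        intro a _
        rw [pathW_cons, hcons]
      · rw [ih (margAux p K 1) (fun n => K (n+1)) (fun i b => hK (i+1) b) j' hj' h,
          margAux_shift]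

lemma main_sum2 : ∀ (T : ℕ) (p : S → ℝ) (K : ℕ → S → S → ℝ),
    (∀ i a, ∑ b, K i a b = 1) → ∀ (j : ℕ) (hj : j < T) (h2 : S → S → ℝ),
    (∑ f : Fin (T+1) → S, pathW p K f *
        h2 (f ⟨j, Nat.lt_succ_of_lt hj⟩) (f ⟨j+1, Nat.succ_lt_succ hj⟩))
    = ∑ a, ∑ b, (margAux p K j a * K j a b) * h2 a b := by
  intro T
  induction T with
  | zero => intro p K hK j hj h2; omega
  | succ T ih =>
    intro p K hK j hj h2
    rw [← (Fin.consEquiv (fun _ : Fin (T+2) => S)).sum_comp, Fintype.sum_prod_type]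
    have hce : ∀ (a : S) (g : Fin (T+1) → S),
        (Fin.consEquiv fun _ : Fin (T+2) => S) (a, g) = Fin.cons a g := fun _ _ => rfl
    simp only [hce]
    rcases j with _ | j'
    · have inner : ∀ a : S,
          (∑ g : Fin (T+1) → S, pathW (T := T) (K 0 a) (fun n => K (n+1)) g * h2 a (g 0))
          = ∑ b, K 0 a b * h2 a b := by
        intro a
        have h3 := main_sum T (K 0 a) (fun n => K (n+1)) (fun i b => hK (i+1) b) 0
            (Nat.succ_pos T) (h2 a)
        simp only [margAux_zero] at h3
        rw [← h3]
        apply Finset.sum_congr rfl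
        intro g _
        rfl
      trans (∑ a, p a * ∑ g : Fin (T+1) → S,
          pathW (T := T) (K 0 a) (fun n => K (n+1)) g * h2 a (g 0))
      · apply Finset.sum_congr rfl
        intro a _
        rw [Finset.mul_sum]
        apply Finset.sum_congr rfl
        intro g _
        rw [pathW_cons]
        have e1 : (Fin.cons a g : Fin (T+2) → S) ⟨0, Nat.lt_succ_of_lt hj⟩ = a := rfl
        have e2 : (Fin.cons a g : Fin (T+2) → S) ⟨0+1, Nat.succ_lt_succ hj⟩ = g 0 := rfl
        rw [e1, e2]
        ring
      · simp only [margAux_zero]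
        apply Finset.sum_congr rfl
        intro a _
        rw [inner a, Finset.mul_sum]
        exact Finset.sum_congr rfl fun b _ => by ring
    · have hj' : j' < T := by omega
      rw [Finset.sum_comm]
      have hcons1 : ∀ (a : S) (g : Fin (T+1) → S),
          (Fin.cons a g : Fin (T+2) → S) ⟨j'+1, Nat.lt_succ_of_lt hj⟩
            = g ⟨j', Nat.lt_succ_of_lt hj'⟩ := fun a g => rfl
      have hcons2 : ∀ (a : S) (g : Fin (T+1) → S),
          (Fin.cons a g : Fin (T+2) → S) ⟨j'+1+1, Nat.succ_lt_succ hj⟩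
            = g ⟨j'+1, Nat.succ_lt_succ hj'⟩ := fun a g => rfl
      trans (∑ g : Fin (T+1) → S,
          pathW (T := T) (margAux p K 1) (fun n => K (n+1)) g *
            h2 (g ⟨j', Nat.lt_succ_of_lt hj'⟩) (g ⟨j'+1, Nat.succ_lt_succ hj'⟩))
      · apply Finset.sum_congr rfl
        intro g _
        rw [← pathW_mix, Finset.sum_mul]
        apply Finset.sum_congr rfl
        intro a _
        rw [pathW_cons, hcons1, hcons2]
      · rw [ih (margAux p K 1) (fun n => K (n+1)) (fun i b => hK (i+1) b) j' hj' h2,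
          margAux_shift]

lemma pairMarginal_pathW {T : ℕ} (p : S → ℝ) (K : ℕ → S → S → ℝ)
    (hK : ∀ i a, ∑ b, K i a b = 1) (k : Fin T) (a b : S) :
    pairMarginal (pathW p K) k (a, b) = margAux p K k.val a * K k.val a b := by
  have h2 := main_sum2 T p K hK k.val k.isLt
      (fun x y => if x = a ∧ y = b then (1:ℝ) else 0)
  have hpos1 : (⟨k.val, Nat.lt_succ_of_lt k.isLt⟩ : Fin (T+1)) = k.castSucc := rfl
  have hpos2 : (⟨k.val+1, Nat.succ_lt_succ k.isLt⟩ : Fin (T+1)) = k.succ := rfl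
  rw [hpos1, hpos2] at h2
  unfold pairMarginal
  calc (∑ f : Fin (T+1) → S, if f k.castSucc = (a, b).1 ∧ f k.succ = (a, b).2
          then pathW p K f else 0)
      = ∑ f : Fin (T+1) → S, pathW p K f *
          (if f k.castSucc = a ∧ f k.succ = b then (1:ℝ) else 0) := by
        apply Finset.sum_congr rfl
        intro f _
        by_cases hc : f k.castSucc = a ∧ f k.succ = b
        · simp [hc]
        · simp [hc]
    _ = ∑ x, ∑ y, (margAux p K k.val x * K k.val x y) *
          (if x = a ∧ y = b then (1:ℝ) else 0) := h2
    _ = margAux p K k.val a * K k.val a b := by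
        rw [Finset.sum_eq_single a, Finset.sum_eq_single b]
        · simp
        · intro y _ hy; simp [hy]
        · intro ha; exact absurd (Finset.mem_univ b) ha
        · intro x _ hx
          apply Finset.sum_eq_zero
          intro y _
          simp [hx]
        · intro ha; exact absurd (Finset.mem_univ a) ha

lemma sum_abs_fiber {T : ℕ} (k : Fin T) (D r : (Fin (T+1) → S) → ℝ) (e : S → S → ℝ)
    (hr : ∀ f, 0 ≤ r f)
    (hD : ∀ f, D f = e (f k.castSucc) (f k.succ) * r f) :
    ∑ f, |D f| = ∑ a : S, ∑ b : S,
      |∑ f : Fin (T+1) → S, if f k.castSucc = a ∧ f k.succ = b then D f else 0| := by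
  have h2 : ∀ a b, |∑ f : Fin (T+1) → S, if f k.castSucc = a ∧ f k.succ = b then D f else 0|
      = ∑ f : Fin (T+1) → S, if f k.castSucc = a ∧ f k.succ = b then |D f| else 0 := by
    intro a b
    have h1 : (∑ f : Fin (T+1) → S, if f k.castSucc = a ∧ f k.succ = b then D f else 0)
        = e a b * ∑ f : Fin (T+1) → S, if f k.castSucc = a ∧ f k.succ = b then r f else 0 := by
      rw [Finset.mul_sum]
      apply Finset.sum_congr rfl
      intro f _
      by_cases hc : f k.castSucc = a ∧ f k.succ = b
      · simp [hD f, hc.1, hc.2]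
      · simp [hc]
    have hrnn : (0:ℝ) ≤ ∑ f : Fin (T+1) → S,
        if f k.castSucc = a ∧ f k.succ = b then r f else 0 := by
      apply Finset.sum_nonneg
      intro f _
      split
      · exact hr f
      · exact le_rfl
    rw [h1, abs_mul, abs_of_nonneg hrnn, Finset.mul_sum]
    apply Finset.sum_congr rfl
    intro f _
    by_cases hc : f k.castSucc = a ∧ f k.succ = b
    · simp [hD f, hc.1, hc.2, abs_mul, abs_of_nonneg (hr f)]
    · simp [hc]
  simp only [h2]
  symm
  calc ∑ a : S, ∑ b : S, ∑ f : Fin (T+1) → S,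
        (if f k.castSucc = a ∧ f k.succ = b then |D f| else 0)
      = ∑ a : S, ∑ f : Fin (T+1) → S, ∑ b : S,
        (if f k.castSucc = a ∧ f k.succ = b then |D f| else 0) :=
        Finset.sum_congr rfl fun a _ => Finset.sum_comm
    _ = ∑ f : Fin (T+1) → S, ∑ a : S, ∑ b : S,
        (if f k.castSucc = a ∧ f k.succ = b then |D f| else 0) := Finset.sum_comm
    _ = ∑ f : Fin (T+1) → S, |D f| := by
        apply Finset.sum_congr rfl
        intro f _
        rw [Finset.sum_eq_single (f k.castSucc)]
        · rw [Finset.sum_eq_single (f k.succ)]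
          · simp
          · intro y _ hy; exact if_neg fun hh => hy hh.2.symm
          · intro h; exact absurd (Finset.mem_univ _) h
        · intro x _ hx
          exact Finset.sum_eq_zero fun y _ => if_neg fun hh => hx hh.1.symm
        · intro h; exact absurd (Finset.mem_univ _) h

/-- Extension of finitely many kernels to all of `ℕ` by identity kernels. -/
noncomputable def extK {T : ℕ} (K : Fin T → S → S → ℝ) : ℕ → S → S → ℝ :=
  fun n => if h : n < T then K ⟨n, h⟩ else fun a b => if b = a then 1 else 0

/-- Hybrid kernels: the first `k` kernels from `Kv`, the rest from `Km`. -/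
noncomputable def hybK {T : ℕ} (Kv Km : Fin T → S → S → ℝ) (k : ℕ) : ℕ → S → S → ℝ :=
  fun n => if n < k then extK Kv n else extK Km n

/-- Hybrid initial distribution. -/
noncomputable def hybP (pm pv : S → ℝ) (k : ℕ) : S → ℝ :=
  if k = 0 then pm else pv

end AuxMarkov

lemma tvDist_nonneg' {X : Type*} [Fintype X] (p q : X → ℝ) : 0 ≤ tvDist p q := by
  unfold tvDist
  positivity

lemma tvDist_triangle' {X : Type*} [Fintype X] (p q r : X → ℝ) :
    tvDist p r ≤ tvDist p q + tvDist q r := by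
  unfold tvDist
  rw [← add_div]
  have h : ∑ x, |p x - r x| ≤ ∑ x, (|p x - q x| + |q x - r x|) :=
    Finset.sum_le_sum fun x _ => abs_sub_le _ _ _
  rw [Finset.sum_add_distrib] at h
  linarith

lemma tvDist_chain' {X : Type*} [Fintype X] (g : ℕ → X → ℝ) (n : ℕ) :
    tvDist (g 0) (g n) ≤ ∑ k ∈ Finset.range n, tvDist (g k) (g (k+1)) := by
  induction n with
  | zero => simp [tvDist]
  | succ n ih =>
    rw [Finset.sum_range_succ]
    calc tvDist (g 0) (g (n+1)) ≤ tvDist (g 0) (g n) + tvDist (g n) (g (n+1)) :=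
          tvDist_triangle' _ _ _
      _ ≤ _ := by linarith

theorem stmt_0 {S : Type*} [Fintype S] [DecidableEq S] (T : ℕ) (hT : 1 ≤ T)
    (μ ν : (Fin (T + 1) → S) → ℝ)
    (hμ0 : ∀ f, 0 ≤ μ f) (hμ1 : ∑ f, μ f = 1)
    (hν0 : ∀ f, 0 ≤ ν f) (hν1 : ∑ f, ν f = 1)
    -- Markov property: the joint distributions factor through an initial
    -- distribution and transition kernels.
    (pμ pν : S → ℝ) (Kμ Kν : Fin T → S → S → ℝ)
    (hpμ : ∀ s, 0 ≤ pμ s) (hpν : ∀ s, 0 ≤ pν s)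
    (hKμ : ∀ i a b, 0 ≤ Kμ i a b) (hKν : ∀ i a b, 0 ≤ Kν i a b)
    (hKμ1 : ∀ i a, ∑ b, Kμ i a b = 1) (hKν1 : ∀ i a, ∑ b, Kν i a b = 1)
    (hμM : ∀ f, μ f = pμ (f 0) * ∏ i : Fin T, Kμ i (f i.castSucc) (f i.succ))
    (hνM : ∀ f, ν f = pν (f 0) * ∏ i : Fin T, Kν i (f i.castSucc) (f i.succ)) :
    tvDist μ ν ≤ 2 * ∑ i : Fin T, tvDist (pairMarginal μ i) (pairMarginal ν i) := by
  classical
  -- basic facts about the extended kernels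
  have hextμ1 : ∀ n a, ∑ b, extK Kμ n a b = 1 := by
    intro n a
    unfold extK
    split
    · exact hKμ1 _ a
    · simp
  have hextν1 : ∀ n a, ∑ b, extK Kν n a b = 1 := by
    intro n a
    unfold extK
    split
    · exact hKν1 _ a
    · simp
  have hextμ0 : ∀ n a b, 0 ≤ extK Kμ n a b := by
    intro n a b
    unfold extK
    split
    · exact hKμ _ a b
    · dsimp only; split <;> norm_num
  have hextν0 : ∀ n a b, 0 ≤ extK Kν n a b := by
    intro n a b
    unfold extK
    split
    · exact hKν _ a b
    · dsimp only; split <;> norm_num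
  have hhybK1 : ∀ k n a, ∑ b, hybK Kν Kμ k n a b = 1 := by
    intro k n a
    unfold hybK
    split
    · exact hextν1 n a
    · exact hextμ1 n a
  have hhybK0 : ∀ k n a b, 0 ≤ hybK Kν Kμ k n a b := by
    intro k n a b
    unfold hybK
    split
    · exact hextν0 n a b
    · exact hextμ0 n a b
  have hhybP0 : ∀ k s, 0 ≤ hybP pμ pν k s := by
    intro k s
    unfold hybP
    split
    · exact hpμ s
    · exact hpν s
  -- expressing μ and ν as path weights
  have hμpath : μ = pathW pμ (extK Kμ) := by
    funext f
    rw [hμM]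
    unfold pathW
    congr 1
    apply Finset.prod_congr rfl
    intro i _
    simp [extK, i.isLt]
  have hνpath : ν = pathW pν (extK Kν) := by
    funext f
    rw [hνM]
    unfold pathW
    congr 1
    apply Finset.prod_congr rfl
    intro i _
    simp [extK, i.isLt]
  have hhyb0 : pathW (hybP pμ pν 0) (hybK Kν Kμ 0) = μ := by
    rw [hμpath]
    funext f
    unfold pathW hybP hybK
    simp
  have hhybT : pathW (hybP pμ pν T) (hybK Kν Kμ T) = ν := by
    rw [hνpath]
    funext f
    unfold pathW hybP hybK
    congr 1
    · rw [if_neg (by omega)]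
    · apply Finset.prod_congr rfl
      intro i _
      rw [if_pos i.isLt]
  -- the key per-step bound
  have step : ∀ k : Fin T,
      tvDist (pathW (T := T) (hybP pμ pν k.val) (hybK Kν Kμ k.val))
        (pathW (T := T) (hybP pμ pν (k.val+1)) (hybK Kν Kμ (k.val+1)))
      ≤ 2 * tvDist (pairMarginal μ k) (pairMarginal ν k) := by
    intro k
    set m := k.val with hm
    set A : S → ℝ := margAux pμ (extK Kμ) m with hA
    set B : S → ℝ := margAux pν (extK Kν) m with hB
    set Bk : S → ℝ := margAux (hybP pμ pν m) (hybK Kν Kμ m) m with hBk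
    set Bk1 : S → ℝ := margAux (hybP pμ pν (m+1)) (hybK Kν Kμ (m+1)) m with hBk1
    -- pair marginals of μ, ν
    have hpairμ : ∀ a b, pairMarginal μ k (a, b) = A a * Kμ k a b := by
      intro a b
      rw [hμpath, pairMarginal_pathW pμ (extK Kμ) hextμ1 k a b]
      congr 1
      simp [extK, hm, k.isLt]
    have hpairν : ∀ a b, pairMarginal ν k (a, b) = B a * Kν k a b := by
      intro a b
      rw [hνpath, pairMarginal_pathW pν (extK Kν) hextν1 k a b]
      congr 1
      simp [extK, hm, k.isLt]
    -- pair marginals of the hybrid chains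
    have hKHm : hybK Kν Kμ m m = Kμ k := by
      unfold hybK extK
      rw [if_neg (lt_irrefl m), dif_pos k.isLt]
    have hKHm1 : hybK Kν Kμ (m+1) m = Kν k := by
      unfold hybK extK
      rw [if_pos (Nat.lt_succ_self m), dif_pos k.isLt]
    have hpairH1 : ∀ a b, pairMarginal (pathW (hybP pμ pν m) (hybK Kν Kμ m)) k (a, b)
        = Bk a * Kμ k a b := by
      intro a b
      rw [pairMarginal_pathW _ _ (hhybK1 m) k a b, ← hm, hKHm]
    have hpairH2 : ∀ a b, pairMarginal (pathW (hybP pμ pν (m+1)) (hybK Kν Kμ (m+1))) k (a, b)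
        = Bk1 a * Kν k a b := by
      intro a b
      rw [pairMarginal_pathW _ _ (hhybK1 (m+1)) k a b, ← hm, hKHm1]
    -- identification of the hybrid time-m marginals
    have hBk1B : Bk1 = B := by
      rw [hBk1, hB]
      have h1 : hybP pμ pν (m+1) = pν := by unfold hybP; rw [if_neg (by omega)]
      rw [h1]
      apply margAux_congr
      intro i hi
      unfold hybK
      rw [if_pos (by omega)]
    -- the product over indices different from k
    set Q : (Fin (T+1) → S) → ℝ :=
      fun f => ∏ i ∈ Finset.univ.erase k, hybK Kν Kμ m i.val (f i.castSucc) (f i.succ) with hQ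
    have hQnn : ∀ f, 0 ≤ Q f := by
      intro f
      apply Finset.prod_nonneg
      intro i _
      exact hhybK0 m i.val _ _
    have hsplit1 : ∀ f, pathW (hybP pμ pν m) (hybK Kν Kμ m) f
        = hybP pμ pν m (f 0) * (Kμ k (f k.castSucc) (f k.succ) * Q f) := by
      intro f
      unfold pathW
      rw [← Finset.mul_prod_erase Finset.univ _ (Finset.mem_univ k), hKHm]
    have hsplit2 : ∀ f, pathW (hybP pμ pν (m+1)) (hybK Kν Kμ (m+1)) f
        = hybP pμ pν (m+1) (f 0) * (Kν k (f k.castSucc) (f k.succ) * Q f) := by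
      intro f
      unfold pathW
      rw [← Finset.mul_prod_erase Finset.univ _ (Finset.mem_univ k), hKHm1]
      congr 1
      congr 1
      apply Finset.prod_congr rfl
      intro i hi
      have hik : i.val ≠ m := by
        intro hc
        exact (Finset.mem_erase.mp hi).1 (Fin.ext (by omega))
      unfold hybK
      by_cases hlt : i.val < m
      · rw [if_pos hlt, if_pos (by omega)]
      · rw [if_neg hlt, if_neg (by omega)]
    -- the fiberwise rewriting of the total-variation sum
    set D : (Fin (T+1) → S) → ℝ := fun f =>
      pathW (hybP pμ pν m) (hybK Kν Kμ m) f
        - pathW (hybP pμ pν (m+1)) (hybK Kν Kμ (m+1)) f with hD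
    have hfib : ∀ a b, (∑ f : Fin (T+1) → S,
        if f k.castSucc = a ∧ f k.succ = b then D f else 0)
        = Bk a * Kμ k a b - Bk1 a * Kν k a b := by
      intro a b
      rw [← hpairH1 a b, ← hpairH2 a b]
      unfold pairMarginal
      rw [← Finset.sum_sub_distrib]
      apply Finset.sum_congr rfl
      intro f _
      rw [hD]
      dsimp only
      split
      · rfl
      · rw [sub_self]
    -- a uniform expression D f = e (f k.castSucc) (f k.succ) * r f
    have habs : ∑ f, |D f| = ∑ a : S, ∑ b : S, |Bk a * Kμ k a b - Bk1 a * Kν k a b| := by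
      rcases Nat.eq_zero_or_pos m with hm0 | hmpos
      · -- k = 0 : the initial distributions differ, but the pair (f 0, f 1) pins everything
        have hk0 : k.castSucc = 0 := by
          apply Fin.ext
          simpa using hm0.symm ▸ rfl
        have hP1 : hybP pμ pν m = pμ := by unfold hybP; rw [if_pos hm0]
        have hP2 : hybP pμ pν (m+1) = pν := by unfold hybP; rw [if_neg (by omega)]
        have := sum_abs_fiber k D Q
          (fun a b => pμ a * Kμ k a b - pν a * Kν k a b) hQnn
          (by
            intro f
            rw [hD]
            dsimp only
            rw [hsplit1, hsplit2, hP1, hP2, ← hk0]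
            ring)
        rw [this]
        apply Finset.sum_congr rfl
        intro a _
        apply Finset.sum_congr rfl
        intro b _
        rw [hfib a b]
      · -- k ≥ 1 : the initial distributions agree
        have hP1 : hybP pμ pν m = pν := by unfold hybP; rw [if_neg (by omega)]
        have hP2 : hybP pμ pν (m+1) = pν := by unfold hybP; rw [if_neg (by omega)]
        have := sum_abs_fiber k D (fun f => pν (f 0) * Q f)
          (fun a b => Kμ k a b - Kν k a b)
          (fun f => mul_nonneg (hpν _) (hQnn f))
          (by
            intro f
            rw [hD]
            dsimp only
            rw [hsplit1, hsplit2, hP1, hP2]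
            ring)
        rw [this]
        apply Finset.sum_congr rfl
        intro a _
        apply Finset.sum_congr rfl
        intro b _
        rw [hfib a b]
    -- the comparison of pair marginals
    have hcomp : ∑ a : S, ∑ b : S, |Bk a * Kμ k a b - Bk1 a * Kν k a b|
        ≤ 2 * ∑ a : S, ∑ b : S, |A a * Kμ k a b - B a * Kν k a b| := by
      rcases Nat.eq_zero_or_pos m with hm0 | hmpos
      · have hBkA : Bk = A := by
          rw [hBk, hA, hm0]
          simp [hybP]
        rw [hBkA, hBk1B]
        have hnn : (0:ℝ) ≤ ∑ a : S, ∑ b : S, |A a * Kμ k a b - B a * Kν k a b| :=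
          Finset.sum_nonneg fun a _ => Finset.sum_nonneg fun b _ => abs_nonneg _
        linarith
      · have hBkB : Bk = B := by
          rw [hBk, hB]
          have h1 : hybP pμ pν m = pν := by unfold hybP; rw [if_neg (by omega)]
          rw [h1]
          apply margAux_congr
          intro i hi
          unfold hybK
          rw [if_pos (by omega)]
        rw [hBkB, hBk1B]
        have key1 : ∀ a b, |B a * Kμ k a b - B a * Kν k a b|
            ≤ |B a - A a| * Kμ k a b + |A a * Kμ k a b - B a * Kν k a b| := by
          intro a b
          have heq : B a * Kμ k a b - B a * Kν k a b
              = (B a - A a) * Kμ k a b + (A a * Kμ k a b - B a * Kν k a b) := by ring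
          rw [heq]
          calc |(B a - A a) * Kμ k a b + (A a * Kμ k a b - B a * Kν k a b)|
              ≤ |(B a - A a) * Kμ k a b| + |A a * Kμ k a b - B a * Kν k a b| := abs_add_le _ _
            _ = |B a - A a| * Kμ k a b + |A a * Kμ k a b - B a * Kν k a b| := by
                rw [abs_mul, abs_of_nonneg (hKμ k a b)]
        have key2 : ∀ a, |B a - A a| ≤ ∑ b, |A a * Kμ k a b - B a * Kν k a b| := by
          intro a
          have hBa : B a = ∑ b, B a * Kν k a b := by
            rw [← Finset.mul_sum, hKν1 k a, mul_one]
          have hAa : A a = ∑ b, A a * Kμ k a b := by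
            rw [← Finset.mul_sum, hKμ1 k a, mul_one]
          calc |B a - A a| = |∑ b, (B a * Kν k a b - A a * Kμ k a b)| := by
                rw [Finset.sum_sub_distrib, ← hBa, ← hAa]
            _ ≤ ∑ b, |B a * Kν k a b - A a * Kμ k a b| := Finset.abs_sum_le_sum_abs _ _
            _ = ∑ b, |A a * Kμ k a b - B a * Kν k a b| :=
                Finset.sum_congr rfl fun b _ => abs_sub_comm _ _
        calc ∑ a : S, ∑ b : S, |B a * Kμ k a b - B a * Kν k a b|
            ≤ ∑ a : S, ∑ b : S,
              (|B a - A a| * Kμ k a b + |A a * Kμ k a b - B a * Kν k a b|) :=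
              Finset.sum_le_sum fun a _ => Finset.sum_le_sum fun b _ => key1 a b
          _ = ∑ a : S, (|B a - A a| + ∑ b : S, |A a * Kμ k a b - B a * Kν k a b|) := by
              apply Finset.sum_congr rfl
              intro a _
              rw [Finset.sum_add_distrib, ← Finset.mul_sum, hKμ1 k a, mul_one]
          _ = (∑ a : S, |B a - A a|)
              + ∑ a : S, ∑ b : S, |A a * Kμ k a b - B a * Kν k a b| :=
              Finset.sum_add_distrib
          _ ≤ (∑ a : S, ∑ b : S, |A a * Kμ k a b - B a * Kν k a b|)
              + ∑ a : S, ∑ b : S, |A a * Kμ k a b - B a * Kν k a b| :=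
              add_le_add_left (Finset.sum_le_sum fun a _ => key2 a) _
          _ = 2 * ∑ a : S, ∑ b : S, |A a * Kμ k a b - B a * Kν k a b| := by ring
    -- conclude
    unfold tvDist
    rw [Fintype.sum_prod_type]
    have hps : ∀ a b, |pairMarginal μ k (a, b) - pairMarginal ν k (a, b)|
        = |A a * Kμ k a b - B a * Kν k a b| := by
      intro a b
      rw [hpairμ a b, hpairν a b]
    have hrw : (∑ x : S, ∑ y : S, |pairMarginal μ k (x, y) - pairMarginal ν k (x, y)|)
        = ∑ a : S, ∑ b : S, |A a * Kμ k a b - B a * Kν k a b| :=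
      Finset.sum_congr rfl fun a _ => Finset.sum_congr rfl fun b _ => hps a b
    rw [hrw]
    have hl : (∑ f : Fin (T+1) → S, |pathW (hybP pμ pν m) (hybK Kν Kμ m) f
        - pathW (hybP pμ pν (m+1)) (hybK Kν Kμ (m+1)) f|) = ∑ f : Fin (T+1) → S, |D f| := by
      apply Finset.sum_congr rfl
      intro f _
      rw [hD]
    rw [hl, habs]
    linarith [hcomp]
  -- assemble via the chain of hybrids
  have hchain := tvDist_chain' (fun n => pathW (T := T) (hybP pμ pν n) (hybK Kν Kμ n)) T
  rw [hhyb0, hhybT] at hchain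
  refine hchain.trans ?_
  rw [Finset.mul_sum]
  rw [← Fin.sum_univ_eq_sum_range (fun n => tvDist (pathW (T := T) (hybP pμ pν n) (hybK Kν Kμ n))
      (pathW (T := T) (hybP pμ pν (n+1)) (hybK Kν Kμ (n+1)))) T]
  exact Finset.sum_le_sum fun k _ => step k
end

section
/- Let B be a partition of {1,...,N}. Suppose ψ, ψ^x are unit vectors and U, U^x are unitaries respecting B, with ‖ψ − ψ^x‖_tr ≤ ε and ‖Uψ − U^x ψ^x‖_tr ≤ ε (trace distances of the corresponding pure states). Let P and P^x be the block-wise product-theory joint probability matrices for (ψ, U) and (ψ^x, U^x) respectively (assuming nonzero block sums). Then ‖P − P^x‖₁ ≤ 3ε. -/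
open Finset

/-- A block-respecting unitary preserves the probability mass in each block. -/
lemma block_mass {N : ℕ} {B : Type*} [Fintype B] [DecidableEq B]
    (π : Fin N → B) (ψ : Fin N → ℂ) (U : Matrix (Fin N) (Fin N) ℂ)
    (hU : U ∈ Matrix.unitaryGroup (Fin N) ℂ)
    (hblk : ∀ i j, π i ≠ π j → U i j = 0) (b : B) :
    ∑ k with π k = b, ‖U.mulVec ψ k‖ ^ 2 = ∑ k with π k = b, ‖ψ k‖ ^ 2 := by
  have hnorm : ∀ z : ℂ, ‖z‖ ^ 2 = ((starRingEnd ℂ) z * z).re := fun z => by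
    rw [mul_comm, Complex.mul_conj]; simp [Complex.sq_norm]
  have hUU : ∀ i j : Fin N, ∑ k, (starRingEnd ℂ) (U k i) * U k j = if i = j then 1 else 0 := by
    intro i j
    have h : (star U * U) i j = (1 : Matrix (Fin N) (Fin N) ℂ) i j := by rw [hU.1]
    simpa [Matrix.mul_apply, Matrix.star_apply, Matrix.one_apply] using h
  have inner : ∀ i j : Fin N,
      (∑ k with π k = b, (starRingEnd ℂ) (U k i) * U k j)
        = if i = j ∧ π i = b then 1 else 0 := by
    intro i j
    by_cases hi : π i = b
    · by_cases hj : π j = b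
      · rw [Finset.sum_filter_of_ne, hUU i j]
        · by_cases hij : i = j <;> simp [hij, hi, hj]
        · intro k _ hk
          by_contra hkb
          exact hk (by rw [hblk k i (by rw [hi]; exact hkb), map_zero, zero_mul])
      · rw [Finset.sum_eq_zero, eq_comm]
        · simp only [ite_eq_right_iff, and_imp]
          intro hij _; exact absurd (hij ▸ hi) hj
        · intro k hk
          simp only [Finset.mem_filter] at hk
          rw [hblk k j (by rw [hk.2]; exact fun h => hj h.symm), mul_zero]
    · rw [Finset.sum_eq_zero, eq_comm]
      · simp [hi]
      · intro k hk
        simp only [Finset.mem_filter] at hk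
        rw [hblk k i (by rw [hk.2]; exact fun h => hi h.symm), map_zero, zero_mul]
  have key : (∑ k with π k = b, (starRingEnd ℂ) (U.mulVec ψ k) * U.mulVec ψ k)
      = ∑ k with π k = b, (starRingEnd ℂ) (ψ k) * ψ k := by
    calc (∑ k with π k = b, (starRingEnd ℂ) (U.mulVec ψ k) * U.mulVec ψ k)
        = ∑ k with π k = b, ∑ i, ∑ j,
            ((starRingEnd ℂ) (U k i) * U k j) * ((starRingEnd ℂ) (ψ i) * ψ j) := by
          refine Finset.sum_congr rfl fun k _ => ?_
          simp only [Matrix.mulVec, dotProduct, map_sum, Finset.sum_mul_sum, map_mul]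
          exact Finset.sum_congr rfl fun i _ => Finset.sum_congr rfl fun j _ => by ring
      _ = ∑ i, ∑ j, (∑ k with π k = b, (starRingEnd ℂ) (U k i) * U k j)
            * ((starRingEnd ℂ) (ψ i) * ψ j) := by
          rw [Finset.sum_comm]
          refine Finset.sum_congr rfl fun i _ => ?_
          rw [Finset.sum_comm]
          exact Finset.sum_congr rfl fun j _ => (Finset.sum_mul _ _ _).symm
      _ = ∑ i, ∑ j, (if i = j ∧ π i = b then (1:ℂ) else 0) * ((starRingEnd ℂ) (ψ i) * ψ j) := by
          exact Finset.sum_congr rfl fun i _ => Finset.sum_congr rfl fun j _ => by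
            rw [inner i j]
      _ = ∑ i, (if π i = b then (starRingEnd ℂ) (ψ i) * ψ i else 0) := by
          refine Finset.sum_congr rfl fun i _ => ?_
          by_cases hi : π i = b
          · simp [hi, Finset.sum_ite_eq, eq_comm]
          · simp [hi]
      _ = ∑ k with π k = b, (starRingEnd ℂ) (ψ k) * ψ k := (Finset.sum_filter _ _).symm
  calc ∑ k with π k = b, ‖U.mulVec ψ k‖ ^ 2
      = (∑ k with π k = b, (starRingEnd ℂ) (U.mulVec ψ k) * U.mulVec ψ k).re := by
        rw [Complex.re_sum]; exact Finset.sum_congr rfl fun k _ => hnorm _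
    _ = (∑ k with π k = b, (starRingEnd ℂ) (ψ k) * ψ k).re := by rw [key]
    _ = ∑ k with π k = b, ‖ψ k‖ ^ 2 := by
        rw [Complex.re_sum]; exact Finset.sum_congr rfl fun k _ => (hnorm _).symm

/-- Cauchy–Schwarz-type bound `∑ √(fi gi) ≤ √(∑ fi) √(∑ gi)`, stated on a single finset. -/
lemma sum_sqrt_mul_le {ι : Type*} (s : Finset ι) (f g : ι → ℝ)
    (hf : ∀ i, 0 ≤ f i) (hg : ∀ i, 0 ≤ g i) :
    ∑ i ∈ s, Real.sqrt (f i * g i) ≤ Real.sqrt (∑ i ∈ s, f i) * Real.sqrt (∑ i ∈ s, g i) := by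
  calc ∑ i ∈ s, Real.sqrt (f i * g i)
      = ∑ i ∈ s, Real.sqrt (f i) * Real.sqrt (g i) :=
        Finset.sum_congr rfl fun i _ => Real.sqrt_mul (hf i) _
    _ ≤ _ := Real.sum_sqrt_mul_sqrt_le s hf hg

private lemma arith_final (S BCv F₁ F₂ ε : ℝ) (hS0 : 0 ≤ S) (hS2 : S ≤ 2)
    (hSsq : S ^ 2 ≤ (2 - 2 * BCv) * (2 + 2 * BCv))
    (hBCge : F₁ + F₂ - 1 ≤ BCv)
    (hF10 : 0 ≤ F₁) (hF20 : 0 ≤ F₂) (hF11 : F₁ ≤ 1) (hF21 : F₂ ≤ 1)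
    (hε1 : 1 - ε ^ 2 ≤ F₁ ^ 2) (hε2 : 1 - ε ^ 2 ≤ F₂ ^ 2) (hε0 : 0 ≤ ε) :
    S ≤ 3 * ε := by
  by_cases hc : (2:ℝ)/3 ≤ ε
  · linarith
  · push_neg at hc
    have hx : 1/2 < F₁ := by nlinarith
    have hy : 1/2 < F₂ := by nlinarith
    have hxy : 0 ≤ F₁ + F₂ - 1 := by linarith
    have hBC2 : (F₁ + F₂ - 1) ^ 2 ≤ BCv ^ 2 := pow_le_pow_left₀ hxy hBCge 2
    have c1 : 0 ≤ (1 - F₁) * (F₁ + 17 - 16 * F₂) := mul_nonneg (by linarith) (by linarith)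
    have c2 : 0 ≤ (1 - F₂) * (1 + F₂) := mul_nonneg (by linarith) (by linarith)
    have key : S ^ 2 ≤ 9 * ε ^ 2 := by nlinarith
    have hfin : S ≤ Real.sqrt (9 * ε ^ 2) := by
      rw [← Real.sqrt_sq hS0]; exact Real.sqrt_le_sqrt key
    calc S ≤ Real.sqrt (9 * ε ^ 2) := hfin
      _ = 3 * ε := by
          rw [show (9:ℝ) * ε ^ 2 = (3 * ε) ^ 2 by ring, Real.sqrt_sq (by linarith)]


private lemma dieks_aux {N : ℕ} {B : Type*} [Fintype B] [DecidableEq B] (π : Fin N → B)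
    (p px q qx : Fin N → ℝ) (Q Qx : B → ℝ)
    (hp0 : ∀ i, 0 ≤ p i) (hpx0 : ∀ i, 0 ≤ px i) (hq0 : ∀ i, 0 ≤ q i) (hqx0 : ∀ i, 0 ≤ qx i)
    (hp1 : ∑ i, p i = 1) (hpx1 : ∑ i, px i = 1)
    (hQ : ∀ b, Q b = ∑ k with π k = b, q k) (hQx : ∀ b, Qx b = ∑ k with π k = b, qx k)
    (hblk : ∀ b, ∑ k with π k = b, q k = ∑ k with π k = b, p k)
    (hblkx : ∀ b, ∑ k with π k = b, qx k = ∑ k with π k = b, px k)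
    (hnz : ∀ b, Q b ≠ 0) (hnzx : ∀ b, Qx b ≠ 0)
    (F₁ F₂ ε : ℝ)
    (hF10 : 0 ≤ F₁) (hF20 : 0 ≤ F₂)
    (hF1 : F₁ ≤ ∑ i, Real.sqrt (p i * px i)) (hF2 : F₂ ≤ ∑ j, Real.sqrt (q j * qx j))
    (hε1 : 1 - ε ^ 2 ≤ F₁ ^ 2) (hε2 : 1 - ε ^ 2 ≤ F₂ ^ 2) (hε0 : 0 ≤ ε) :
    ∑ i, ∑ j, |(if π i = π j then p i * q j / Q (π j) else 0)
      - (if π i = π j then px i * qx j / Qx (π j) else 0)| ≤ 3 * ε := by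
  -- basic positivity
  have hQ0 : ∀ b, 0 < Q b := fun b =>
    ((by rw [hQ]; exact Finset.sum_nonneg fun k _ => hq0 k : (0:ℝ) ≤ Q b)).lt_of_ne'  (hnz b)
  have hQx0 : ∀ b, 0 < Qx b := fun b =>
    ((by rw [hQx]; exact Finset.sum_nonneg fun k _ => hqx0 k : (0:ℝ) ≤ Qx b)).lt_of_ne' (hnzx b)
  -- fiberwise decomposition
  have hfiber : ∀ f : Fin N → ℝ, ∑ b : B, ∑ i with π i = b, f i = ∑ i, f i := by
    intro f; rw [Finset.sum_fiberwise_eq_sum_filter]; simp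
  have hq1 : ∑ j, q j = 1 := by
    rw [← hfiber q]
    calc ∑ b : B, ∑ k with π k = b, q k = ∑ b : B, ∑ k with π k = b, p k :=
          Finset.sum_congr rfl fun b _ => hblk b
      _ = 1 := by rw [hfiber p]; exact hp1
  have hqx1 : ∑ j, qx j = 1 := by
    rw [← hfiber qx]
    calc ∑ b : B, ∑ k with π k = b, qx k = ∑ b : B, ∑ k with π k = b, px k :=
          Finset.sum_congr rfl fun b _ => hblkx b
      _ = 1 := by rw [hfiber px]; exact hpx1
  have hQsum : ∑ b : B, Q b = 1 := by
    rw [Finset.sum_congr rfl fun b _ => hQ b, hfiber q]; exact hq1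
  have hQxsum : ∑ b : B, Qx b = 1 := by
    rw [Finset.sum_congr rfl fun b _ => hQx b, hfiber qx]; exact hqx1
  -- the filter swap
  have hfilswap : ∀ b : B, Finset.univ.filter (fun j : Fin N => b = π j)
      = Finset.univ.filter (fun j : Fin N => π j = b) := by
    intro b; ext j
    simp only [Finset.mem_filter, Finset.mem_univ, true_and]
    exact eq_comm
  -- a generic row-sum computation
  have hrowgen : ∀ (u : Fin N → ℝ) (R : B → ℝ), (∀ b, R b = ∑ k with π k = b, u k) →
      (∀ b, R b ≠ 0) → ∀ (v : Fin N → ℝ) (i : Fin N),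
      ∑ j, (if π i = π j then v i * u j / R (π j) else 0) = v i := by
    intro u R hR hRnz v i
    have h1 : ∀ j, (if π i = π j then v i * u j / R (π j) else 0)
        = (if π i = π j then v i * u j / R (π i) else 0) := by
      intro j; by_cases h : π i = π j
      · rw [if_pos h, if_pos h, h]
      · rw [if_neg h, if_neg h]
    calc ∑ j, (if π i = π j then v i * u j / R (π j) else 0)
        = ∑ j, (if π i = π j then v i * u j / R (π i) else 0) :=
          Finset.sum_congr rfl fun j _ => h1 j
      _ = ∑ j with π i = π j, v i * u j / R (π i) := (Finset.sum_filter _ _).symm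
      _ = v i * (∑ j with π i = π j, u j) / R (π i) := by
          rw [Finset.mul_sum, Finset.sum_div]
      _ = v i := by
          have h2 : ∑ j with π i = π j, u j = R (π i) := by
            rw [hR]
            apply Finset.sum_congr _ fun _ _ => rfl
            ext j
            simp only [Finset.mem_filter, Finset.mem_univ, true_and]
            exact eq_comm
          rw [h2, mul_div_assoc, div_self (hRnz _), mul_one]
  -- package as functions on pairs
  set ff : Fin N × Fin N → ℝ :=
    fun z => if π z.1 = π z.2 then p z.1 * q z.2 / Q (π z.2) else 0 with hfdef
  set gg : Fin N × Fin N → ℝ :=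
    fun z => if π z.1 = π z.2 then px z.1 * qx z.2 / Qx (π z.2) else 0 with hgdef
  have hf0 : ∀ z, 0 ≤ ff z := by
    intro z; rw [hfdef]; dsimp only
    split
    · exact div_nonneg (mul_nonneg (hp0 _) (hq0 _)) (hQ0 _).le
    · exact le_refl 0
  have hg0 : ∀ z, 0 ≤ gg z := by
    intro z; rw [hgdef]; dsimp only
    split
    · exact div_nonneg (mul_nonneg (hpx0 _) (hqx0 _)) (hQx0 _).le
    · exact le_refl 0
  have hf1 : ∑ z, ff z = 1 := by
    rw [hfdef, Fintype.sum_prod_type]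
    calc ∑ i, ∑ j, (if π i = π j then p i * q j / Q (π j) else 0)
        = ∑ i, p i := Finset.sum_congr rfl fun i _ => hrowgen q Q hQ hnz p i
      _ = 1 := hp1
  have hg1 : ∑ z, gg z = 1 := by
    rw [hgdef, Fintype.sum_prod_type]
    calc ∑ i, ∑ j, (if π i = π j then px i * qx j / Qx (π j) else 0)
        = ∑ i, px i := Finset.sum_congr rfl fun i _ => hrowgen qx Qx hQx hnzx px i
      _ = 1 := hpx1
  -- abbreviations for the Bhattacharyya analysis
  set a : Fin N → ℝ := fun i => Real.sqrt (p i * px i) with hadef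
  set c : Fin N → ℝ := fun j => Real.sqrt (q j * qx j) with hcdef
  set m : B → ℝ := fun b => Real.sqrt (Q b * Qx b) with hmdef
  set A : B → ℝ := fun b => ∑ i with π i = b, a i with hAdef
  set Cc : B → ℝ := fun b => ∑ j with π j = b, c j with hCdef
  have hm0 : ∀ b, 0 < m b := fun b => Real.sqrt_pos.2 (mul_pos (hQ0 b) (hQx0 b))
  have ha0 : ∀ i, 0 ≤ a i := fun i => Real.sqrt_nonneg _
  have hc0 : ∀ j, 0 ≤ c j := fun j => Real.sqrt_nonneg _
  -- pointwise factorization of √(ff·gg)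
  have hfg : ∀ z : Fin N × Fin N, Real.sqrt (ff z * gg z)
      = if π z.1 = π z.2 then a z.1 * (c z.2 / m (π z.2)) else 0 := by
    intro z
    rw [hfdef, hgdef, hadef, hcdef, hmdef]; dsimp only
    by_cases h : π z.1 = π z.2
    · rw [if_pos h, if_pos h, if_pos h]
      have e : p z.1 * q z.2 / Q (π z.2) * (px z.1 * qx z.2 / Qx (π z.2))
          = (p z.1 * px z.1) * ((q z.2 * qx z.2) / (Q (π z.2) * Qx (π z.2))) := by ring
      rw [e, Real.sqrt_mul (mul_nonneg (hp0 _) (hpx0 _)),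
        Real.sqrt_div (mul_nonneg (hq0 _) (hqx0 _))]
    · rw [if_neg h, if_neg h, if_neg h, zero_mul, Real.sqrt_zero]
  -- row computation for the Bhattacharyya sum
  have hrow2 : ∀ i, ∑ j, (if π i = π j then a i * (c j / m (π j)) else 0)
      = a i * (Cc (π i) / m (π i)) := by
    intro i
    have h1 : ∀ j, (if π i = π j then a i * (c j / m (π j)) else 0)
        = (if π i = π j then a i * (c j / m (π i)) else 0) := by
      intro j; by_cases h : π i = π j
      · rw [if_pos h, if_pos h, h]
      · rw [if_neg h, if_neg h]
    calc ∑ j, (if π i = π j then a i * (c j / m (π j)) else 0)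
        = ∑ j, (if π i = π j then a i * (c j / m (π i)) else 0) :=
          Finset.sum_congr rfl fun j _ => h1 j
      _ = ∑ j with π i = π j, a i * (c j / m (π i)) := (Finset.sum_filter _ _).symm
      _ = a i * ((∑ j with π i = π j, c j) / m (π i)) := by
          rw [Finset.sum_div, Finset.mul_sum]
      _ = a i * (Cc (π i) / m (π i)) := by
          rw [hCdef]; dsimp only
          congr 2
          apply Finset.sum_congr _ fun _ _ => rfl
          ext j
          simp only [Finset.mem_filter, Finset.mem_univ, true_and]
          exact eq_comm
  set BCv : ℝ := ∑ z : Fin N × Fin N, Real.sqrt (ff z * gg z) with hBCvdef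
  have hBCeq : BCv = ∑ b : B, A b * (Cc b / m b) := by
    rw [hBCvdef]
    calc ∑ z : Fin N × Fin N, Real.sqrt (ff z * gg z)
        = ∑ z : Fin N × Fin N, (if π z.1 = π z.2 then a z.1 * (c z.2 / m (π z.2)) else 0) :=
          Finset.sum_congr rfl fun z _ => hfg z
      _ = ∑ i, ∑ j, (if π i = π j then a i * (c j / m (π j)) else 0) :=
          Fintype.sum_prod_type _
      _ = ∑ i, a i * (Cc (π i) / m (π i)) := Finset.sum_congr rfl fun i _ => hrow2 i
      _ = ∑ b : B, ∑ i with π i = b, a i * (Cc (π i) / m (π i)) :=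
          (hfiber fun i => a i * (Cc (π i) / m (π i))).symm
      _ = ∑ b : B, A b * (Cc b / m b) := by
          refine Finset.sum_congr rfl fun b _ => ?_
          calc ∑ i with π i = b, a i * (Cc (π i) / m (π i))
              = ∑ i with π i = b, a i * (Cc b / m b) :=
                Finset.sum_congr rfl fun i hi => by
                  rw [(Finset.mem_filter.1 hi).2]
            _ = A b * (Cc b / m b) := by rw [hAdef]; exact (Finset.sum_mul _ _ _).symm
  -- Cauchy–Schwarz bounds per block
  have hAle : ∀ b, A b ≤ m b := by
    intro b
    calc A b ≤ Real.sqrt (∑ i with π i = b, p i) * Real.sqrt (∑ i with π i = b, px i) :=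
          sum_sqrt_mul_le _ p px hp0 hpx0
      _ = m b := by
          rw [hmdef]; dsimp only
          rw [← hblk b, ← hblkx b, ← hQ b, ← hQx b, ← Real.sqrt_mul (hQ0 b).le]
  have hCle : ∀ b, Cc b ≤ m b := by
    intro b
    calc Cc b ≤ Real.sqrt (∑ j with π j = b, q j) * Real.sqrt (∑ j with π j = b, qx j) :=
          sum_sqrt_mul_le _ q qx hq0 hqx0
      _ = m b := by
          rw [hmdef]; dsimp only
          rw [← hQ b, ← hQx b, ← Real.sqrt_mul (hQ0 b).le]
  have hA0 : ∀ b, 0 ≤ A b := fun b => Finset.sum_nonneg fun i _ => ha0 i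
  have hC0 : ∀ b, 0 ≤ Cc b := fun b => Finset.sum_nonneg fun j _ => hc0 j
  have hblockineq : ∀ b, A b + Cc b - m b ≤ A b * (Cc b / m b) := by
    intro b
    have h := mul_nonneg (sub_nonneg.2 (hAle b)) (sub_nonneg.2 (hCle b))
    have key : (A b + Cc b - m b) * m b ≤ A b * Cc b := by nlinarith [h]
    calc A b + Cc b - m b = (A b + Cc b - m b) * m b / m b := by
          rw [mul_div_cancel_right₀ _ (hm0 b).ne']
      _ ≤ A b * Cc b / m b := by gcongr
      _ = A b * (Cc b / m b) := mul_div_assoc _ _ _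
  have hmsum : ∑ b : B, m b ≤ 1 := by
    calc ∑ b : B, m b ≤ Real.sqrt (∑ b : B, Q b) * Real.sqrt (∑ b : B, Qx b) :=
          sum_sqrt_mul_le _ Q Qx (fun b => (hQ0 b).le) (fun b => (hQx0 b).le)
      _ = 1 := by rw [hQsum, hQxsum, Real.sqrt_one, mul_one]
  have hAsum : ∑ b : B, A b = ∑ i, a i := hfiber a
  have hCsum : ∑ b : B, Cc b = ∑ j, c j := hfiber c
  have hBCge : F₁ + F₂ - 1 ≤ BCv := by
    calc F₁ + F₂ - 1 ≤ (∑ i, a i) + (∑ j, c j) - ∑ b : B, m b := by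
          linarith [hF1, hF2, hmsum]
      _ = ∑ b : B, (A b + Cc b - m b) := by
          rw [← hAsum, ← hCsum, ← Finset.sum_add_distrib, ← Finset.sum_sub_distrib]
      _ ≤ ∑ b : B, A b * (Cc b / m b) := Finset.sum_le_sum fun b _ => hblockineq b
      _ = BCv := hBCeq.symm
  have hBC0 : 0 ≤ BCv := Finset.sum_nonneg fun z _ => Real.sqrt_nonneg _
  have hF11 : F₁ ≤ 1 := by
    calc F₁ ≤ ∑ i, a i := hF1
      _ ≤ Real.sqrt (∑ i, p i) * Real.sqrt (∑ i, px i) := sum_sqrt_mul_le _ p px hp0 hpx0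
      _ = 1 := by rw [hp1, hpx1, Real.sqrt_one, mul_one]
  have hF21 : F₂ ≤ 1 := by
    calc F₂ ≤ ∑ j, c j := hF2
      _ ≤ Real.sqrt (∑ j, q j) * Real.sqrt (∑ j, qx j) := sum_sqrt_mul_le _ q qx hq0 hqx0
      _ = 1 := by rw [hq1, hqx1, Real.sqrt_one, mul_one]
  -- rewrite the goal as a sum over pairs
  have hgoal : ∑ i, ∑ j, |(if π i = π j then p i * q j / Q (π j) else 0)
      - (if π i = π j then px i * qx j / Qx (π j) else 0)|
      = ∑ z : Fin N × Fin N, |ff z - gg z| :=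
    (Fintype.sum_prod_type (fun z => |ff z - gg z|)).symm
  rw [hgoal]
  have hS0 : 0 ≤ ∑ z : Fin N × Fin N, |ff z - gg z| :=
    Finset.sum_nonneg fun z _ => abs_nonneg _
  -- Cauchy–Schwarz bound on the ℓ¹ distance
  have hSsq : (∑ z : Fin N × Fin N, |ff z - gg z|) ^ 2 ≤ (2 - 2 * BCv) * (2 + 2 * BCv) := by
    have e1 : ∀ z, |ff z - gg z|
        = |Real.sqrt (ff z) - Real.sqrt (gg z)| * (Real.sqrt (ff z) + Real.sqrt (gg z)) := by
      intro z
      have h1 := Real.sq_sqrt (hf0 z); have h2 := Real.sq_sqrt (hg0 z)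
      have e : ff z - gg z
          = (Real.sqrt (ff z) - Real.sqrt (gg z)) * (Real.sqrt (ff z) + Real.sqrt (gg z)) := by
        linear_combination -h1 + h2
      rw [e, abs_mul, abs_of_nonneg (add_nonneg (Real.sqrt_nonneg _) (Real.sqrt_nonneg _))]
    have e2 : ∀ z, Real.sqrt (ff z * gg z) = Real.sqrt (ff z) * Real.sqrt (gg z) :=
      fun z => Real.sqrt_mul (hf0 z) _
    have s1 : ∑ z : Fin N × Fin N, (ff z + gg z - 2 * Real.sqrt (ff z * gg z)) = 2 - 2 * BCv := by
      rw [Finset.sum_sub_distrib, Finset.sum_add_distrib, hf1, hg1, ← Finset.mul_sum, ← hBCvdef]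
      norm_num
    have s2 : ∑ z : Fin N × Fin N, (ff z + gg z + 2 * Real.sqrt (ff z * gg z)) = 2 + 2 * BCv := by
      rw [Finset.sum_add_distrib, Finset.sum_add_distrib, hf1, hg1, ← Finset.mul_sum, ← hBCvdef]
      norm_num
    calc (∑ z : Fin N × Fin N, |ff z - gg z|) ^ 2
        = (∑ z : Fin N × Fin N,
            |Real.sqrt (ff z) - Real.sqrt (gg z)| * (Real.sqrt (ff z) + Real.sqrt (gg z))) ^ 2 := by
          rw [Finset.sum_congr rfl fun z _ => e1 z]
      _ ≤ (∑ z : Fin N × Fin N, |Real.sqrt (ff z) - Real.sqrt (gg z)| ^ 2)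
            * (∑ z : Fin N × Fin N, (Real.sqrt (ff z) + Real.sqrt (gg z)) ^ 2) :=
          sum_mul_sq_le_sq_mul_sq _ _ _
      _ = (∑ z : Fin N × Fin N, (ff z + gg z - 2 * Real.sqrt (ff z * gg z)))
            * (∑ z : Fin N × Fin N, (ff z + gg z + 2 * Real.sqrt (ff z * gg z))) := by
          congr 1
          · refine Finset.sum_congr rfl fun z _ => ?_
            rw [sq_abs, e2 z]
            have h1 := Real.sq_sqrt (hf0 z); have h2 := Real.sq_sqrt (hg0 z)
            linear_combination h1 + h2
          · refine Finset.sum_congr rfl fun z _ => ?_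
            rw [e2 z]
            have h1 := Real.sq_sqrt (hf0 z); have h2 := Real.sq_sqrt (hg0 z)
            linear_combination h1 + h2
      _ = (2 - 2 * BCv) * (2 + 2 * BCv) := by rw [s1, s2]
  -- final arithmetic
  have hS2 : ∑ z : Fin N × Fin N, |ff z - gg z| ≤ 2 := by
    calc ∑ z : Fin N × Fin N, |ff z - gg z| ≤ ∑ z : Fin N × Fin N, (ff z + gg z) :=
        Finset.sum_le_sum fun z _ =>
          abs_le.2 ⟨by linarith [hf0 z, hg0 z], by linarith [hf0 z, hg0 z]⟩
      _ = 2 := by rw [Finset.sum_add_distrib, hf1, hg1]; norm_num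
  exact arith_final _ BCv F₁ F₂ ε hS0 hS2 hSsq hBCge hF10 hF20 hF11 hF21 hε1 hε2 hε0


/-- Trace distance between the pure states associated to two unit vectors,
given by `√(1 - |⟨ψ|φ⟩|²)`. -/
noncomputable def pureTraceDist {N : ℕ} (ψ φ : Fin N → ℂ) : ℝ :=
  Real.sqrt (1 - ‖∑ i, (starRingEnd ℂ) (ψ i) * φ i‖ ^ 2)

/-- The block-wise product-theory (Dieks) joint probability matrix for a
state `ψ` and unitary `U` respecting the block partition `π`. -/
noncomputable def dieksMatrix {N : ℕ} {B : Type*} [Fintype B] [DecidableEq B]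
    (π : Fin N → B) (ψ : Fin N → ℂ) (U : Matrix (Fin N) (Fin N) ℂ)
    (i j : Fin N) : ℝ :=
  if π i = π j then
    ‖ψ i‖ ^ 2 * ‖U.mulVec ψ j‖ ^ 2 / (∑ k with π k = π j, ‖U.mulVec ψ k‖ ^ 2)
  else 0

theorem stmt_15 {N : ℕ} {B : Type*} [Fintype B] [DecidableEq B]
    (π : Fin N → B) (ψ ψx : Fin N → ℂ)
    (hψ : ∑ i, ‖ψ i‖ ^ 2 = 1) (hψx : ∑ i, ‖ψx i‖ ^ 2 = 1)
    (U Ux : Matrix (Fin N) (Fin N) ℂ)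
    (hU : U ∈ Matrix.unitaryGroup (Fin N) ℂ)
    (hUx : Ux ∈ Matrix.unitaryGroup (Fin N) ℂ)
    (hblkU : ∀ i j, π i ≠ π j → U i j = 0)
    (hblkUx : ∀ i j, π i ≠ π j → Ux i j = 0)
    (hnz : ∀ b : B, (∑ k with π k = b, ‖U.mulVec ψ k‖ ^ 2) ≠ 0)
    (hnzx : ∀ b : B, (∑ k with π k = b, ‖Ux.mulVec ψx k‖ ^ 2) ≠ 0)
    (ε : ℝ)
    (h1 : pureTraceDist ψ ψx ≤ ε)
    (h2 : pureTraceDist (U.mulVec ψ) (Ux.mulVec ψx) ≤ ε) :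
    ∑ i, ∑ j, |dieksMatrix π ψ U i j - dieksMatrix π ψx Ux i j| ≤ 3 * ε := by
  simp only [pureTraceDist] at h1 h2
  have hε0 : 0 ≤ ε := le_trans (Real.sqrt_nonneg _) h1
  -- convert trace-distance hypotheses into fidelity bounds
  have hsq : ∀ (F : ℝ), Real.sqrt (1 - F ^ 2) ≤ ε → 1 - ε ^ 2 ≤ F ^ 2 := by
    intro F hF
    rcases le_or_gt 0 (1 - F ^ 2) with h | h
    · have h' := pow_le_pow_left₀ (Real.sqrt_nonneg _) hF 2
      rw [Real.sq_sqrt h] at h'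
      linarith
    · nlinarith [sq_nonneg ε]
  have hεa := hsq _ h1
  have hεb := hsq _ h2
  -- fidelity dominated by Bhattacharyya coefficient
  have hBh : ∀ (φ φx : Fin N → ℂ), ‖∑ i, (starRingEnd ℂ) (φ i) * φx i‖
      ≤ ∑ i, Real.sqrt (‖φ i‖ ^ 2 * ‖φx i‖ ^ 2) := by
    intro φ φx
    calc ‖∑ i, (starRingEnd ℂ) (φ i) * φx i‖ ≤ ∑ i, ‖(starRingEnd ℂ) (φ i) * φx i‖ :=
        norm_sum_le _ _
      _ = ∑ i, Real.sqrt (‖φ i‖ ^ 2 * ‖φx i‖ ^ 2) := by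
          refine Finset.sum_congr rfl fun i _ => ?_
          rw [norm_mul, RCLike.norm_conj, Real.sqrt_mul (sq_nonneg _),
            Real.sqrt_sq (norm_nonneg _), Real.sqrt_sq (norm_nonneg _)]
  -- block mass preservation
  have hblk' := block_mass π ψ U hU hblkU
  have hblkx' := block_mass π ψx Ux hUx hblkUx
  simp only [dieksMatrix]
  exact dieks_aux π (fun i => ‖ψ i‖ ^ 2) (fun i => ‖ψx i‖ ^ 2)
    (fun j => ‖U.mulVec ψ j‖ ^ 2) (fun j => ‖Ux.mulVec ψx j‖ ^ 2)
    (fun b => ∑ k with π k = b, ‖U.mulVec ψ k‖ ^ 2)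
    (fun b => ∑ k with π k = b, ‖Ux.mulVec ψx k‖ ^ 2)
    (fun i => sq_nonneg _) (fun i => sq_nonneg _) (fun j => sq_nonneg _) (fun j => sq_nonneg _)
    hψ hψx (fun b => rfl) (fun b => rfl) hblk' hblkx' hnz hnzx
    _ _ ε (norm_nonneg _) (norm_nonneg _) (hBh ψ ψx) (hBh (U.mulVec ψ) (Ux.mulVec ψx))
    hεa hεb hε0
end

section
/- Consider the state α|x⟩|1⟩ + β Σ_{y∈{0,1}^n} |y⟩|0⟩ with α = 1/√(2^{n/3} + 2^{−n/3+1} + 1) and β = 2^{−n/3}α (where N = 2^n and x is a fixed marked element). The probability that a computational-basis measurement yields outcome (x, 1) is α² = Ω(N^{−1/3}), and if m = ⌈N^{1/3}(log N + 1)⌉ independent such measurements are performed, the probability that at least one yields (x,1) is at least 1 − (1 − cN^{−1/3})^m ≥ 1 − e^{−c(log N + 1)} for the appropriate constant c > 0. -/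
theorem stmt_17 :
    ∃ c : ℝ, 0 < c ∧ ∀ N : ℕ, 2 ≤ N →
      c * (N : ℝ) ^ (-(1 : ℝ) / 3) ≤
        1 / ((N : ℝ) ^ ((1 : ℝ) / 3) + 2 * (N : ℝ) ^ (-(1 : ℝ) / 3) + 1) ∧
      1 - Real.exp (-(c * (Real.log N + 1))) ≤
        1 - (1 - c * (N : ℝ) ^ (-(1 : ℝ) / 3)) ^
          ⌈(N : ℝ) ^ ((1 : ℝ) / 3) * (Real.log N + 1)⌉₊ ∧
      1 - (1 - c * (N : ℝ) ^ (-(1 : ℝ) / 3)) ^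
          ⌈(N : ℝ) ^ ((1 : ℝ) / 3) * (Real.log N + 1)⌉₊ ≤
        1 - (1 - 1 / ((N : ℝ) ^ ((1 : ℝ) / 3) + 2 * (N : ℝ) ^ (-(1 : ℝ) / 3) + 1)) ^
          ⌈(N : ℝ) ^ ((1 : ℝ) / 3) * (Real.log N + 1)⌉₊ := by
  refine ⟨1/4, by norm_num, fun N hN => ?_⟩
  have hN0 : (0 : ℝ) < N := by positivity
  have hN1 : (1 : ℝ) ≤ N := by exact_mod_cast Nat.one_le_of_lt hN
  set t : ℝ := (N : ℝ) ^ ((1 : ℝ) / 3) with ht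
  set s : ℝ := (N : ℝ) ^ (-(1 : ℝ) / 3) with hs
  have ht1 : (1 : ℝ) ≤ t := Real.one_le_rpow hN1 (by norm_num)
  have hs0 : 0 < s := Real.rpow_pos_of_pos hN0 _
  have hs1 : s ≤ 1 := by
    rw [hs]
    calc (N:ℝ) ^ (-(1:ℝ)/3) ≤ (N:ℝ) ^ (0:ℝ) :=
          Real.rpow_le_rpow_of_exponent_le hN1 (by norm_num)
      _ = 1 := Real.rpow_zero _
  have hst : s * t = 1 := by
    rw [hs, ht, ← Real.rpow_add hN0]
    norm_num
  have hD0 : 0 < t + 2 * s + 1 := by linarith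
  -- first inequality
  have h1 : (1/4 : ℝ) * s ≤ 1 / (t + 2 * s + 1) := by
    rw [le_div_iff₀ hD0]
    nlinarith
  refine ⟨h1, ?_, ?_⟩
  · -- second inequality
    set m := ⌈t * (Real.log N + 1)⌉₊ with hm
    have hlog : 0 ≤ Real.log N := Real.log_nonneg hN1
    have hcs1 : 1/4 * s ≤ 1 := by linarith
    have hstep : (1 - 1/4 * s) ≤ Real.exp (-(1/4 * s)) := by
      have := Real.add_one_le_exp (-(1/4 * s)); linarith
    have hpow : (1 - 1/4 * s) ^ m ≤ Real.exp (-(1/4 * s)) ^ m :=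
      pow_le_pow_left₀ (by linarith) hstep m
    have hexp : Real.exp (-(1/4 * s)) ^ m = Real.exp ((m : ℝ) * (-(1/4 * s))) := by
      rw [← Real.exp_nat_mul]
    have hmge : t * (Real.log N + 1) ≤ (m : ℝ) := Nat.le_ceil _
    have hmono : (m : ℝ) * (-(1/4 * s)) ≤ -(1/4 * (Real.log N + 1)) := by
      have : 1/4 * (Real.log N + 1) ≤ 1/4 * (s * (m : ℝ)) := by
        have : s * (t * (Real.log N + 1)) ≤ s * m :=
          mul_le_mul_of_nonneg_left hmge hs0.le
        nlinarith
      nlinarith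
    have : (1 - 1/4 * s) ^ m ≤ Real.exp (-(1/4 * (Real.log N + 1))) := by
      calc (1 - 1/4 * s) ^ m ≤ Real.exp ((m : ℝ) * (-(1/4 * s))) := hexp ▸ hpow
        _ ≤ Real.exp (-(1/4 * (Real.log N + 1))) := Real.exp_le_exp.mpr hmono
    linarith
  · -- third inequality
    have hb1 : 1 / (t + 2 * s + 1) ≤ 1 := by
      rw [div_le_one hD0]; linarith
    have := pow_le_pow_left₀ (by linarith)
      (by linarith : 1 - 1 / (t + 2 * s + 1) ≤ 1 - 1/4 * s)
      ⌈t * (Real.log N + 1)⌉₊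
    linarith
end
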